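/- For n > 1, if p₁p₂⋯pₙ is a semi-meander of order n, then its reversal pₙpₙ₋₁⋯p₁ is also a semi-meander of order n; consequently, the number of semi-meanders of order n is even. -/

import Mathlib

/-- 1-based position of symbol `e` in the string `p`. -/
def posOf (p : List ℕ) (e : ℕ) : ℕ := p.idxOf e + 1

/-- `x` lies strictly between `a` and `b`. -/
def StrictlyBetween (a b x : ℕ) : Prop := min a b < x ∧ x < max a b

/-- Two same-side arcs with endpoint pairs `{a,b}` and `{c,d}` cross
if exactly one of `c`, `d` lies strictly between `a` and `b`. -/
def ArcsCross (a b c d : ℕ) : Prop :=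
  Xor' (StrictlyBetween a b c) (StrictlyBetween a b d)

/-- A stamp folding of order `n`: a permutation of `1,…,n` (as a list, `p i` is
the stamp at position `i`) such that no two bottom arcs (joining the positions
of stamps `i` and `i+1` for odd `i`) cross, and no two top arcs (even `i`) cross. -/
def IsStampFolding (n : ℕ) (p : List ℕ) : Prop :=
  p.Perm (List.range' 1 n) ∧
  ∀ i j : ℕ, 1 ≤ i → i < j → j + 1 ≤ n → i % 2 = j % 2 →
    ¬ ArcsCross (posOf p i) (posOf p (i + 1)) (posOf p j) (posOf p (j + 1))

/-- A semi-meander of order `n`: a stamp folding in which stamp `n` is visible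
from above when `n` is even and from below when `n` is odd, i.e. no arc on the
relevant side strictly covers the position of stamp `n`. -/
def IsSemiMeander (n : ℕ) (p : List ℕ) : Prop :=
  IsStampFolding n p ∧
  ∀ i : ℕ, 1 ≤ i → i + 1 ≤ n → i % 2 = n % 2 →
    ¬ StrictlyBetween (posOf p i) (posOf p (i + 1)) (posOf p n)

/-!
Reversing a list sends position `k` to `n + 1 - k`, an order-reversing bijection of `1, …, n`, so
it preserves betweenness of positions, hence both the non-crossing of arcs and the visibility of
stamp `n`. Reversal is thus an involution on semi-meanders, and it has no fixed points since a
list without repetitions of length at least two is not a palindrome; so semi-meanders come in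
pairs.
-/

theorem Set.Finite.even_ncard_of_involution {α : Type*} {s : Set α} (hs : s.Finite)
    {f : α → α} (hmaps : Set.MapsTo f s s) (hinv : ∀ a ∈ s, f (f a) = a)
    (hfix : ∀ a ∈ s, f a ≠ a) : Even s.ncard := by
  rw [← ZMod.natCast_eq_zero_iff_even, Set.ncard_eq_toFinset_card s hs, Finset.card_eq_sum_ones,
    Nat.cast_sum, Nat.cast_one]
  -- the orbits `{a, f a}` contribute `1 + 1 = 0` in `ZMod 2`
  refine Finset.sum_involution (fun a _ ↦ f a) (fun _ _ ↦ rfl) (fun a ha _ ↦ ?_) (fun a ha ↦ ?_)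
    (fun a ha ↦ ?_) <;> rw [Set.Finite.mem_toFinset] at ha
  exacts [hfix a ha, hs.mem_toFinset.mpr (hmaps ha), hinv a ha]

theorem List.Nodup.idxOf_reverse {α : Type*} [BEq α] [LawfulBEq α] {l : List α} (hl : l.Nodup)
    {a : α} (ha : a ∈ l) : l.reverse.idxOf a = l.length - 1 - l.idxOf a := by
  have hlt : l.idxOf a < l.length := List.idxOf_lt_length_iff.mpr ha
  have hrev : l.length - 1 - l.idxOf a < l.reverse.length := by
    simp only [List.length_reverse]; omega
  have hget : l.reverse[l.length - 1 - l.idxOf a] = a := by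
    rw [List.getElem_reverse]
    simp_rw [show l.length - 1 - (l.length - 1 - l.idxOf a) = l.idxOf a by omega]
    exact List.getElem_idxOf hlt
  simpa only [hget] using (List.nodup_reverse.mpr hl).idxOf_getElem _ hrev

theorem List.Nodup.reverse_ne_self {α : Type*} {l : List α} (hl : l.Nodup) (hlen : 2 ≤ l.length) :
    l.reverse ≠ l := by
  intro h
  have hfirst := List.getElem_of_eq h (i := 0) (by simp only [List.length_reverse]; omega)
  rw [List.getElem_reverse, hl.getElem_inj_iff] at hfirst
  omega

theorem posOf_le_length_add_one (l : List ℕ) (e : ℕ) : posOf l e ≤ l.length + 1 :=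
  Nat.succ_le_succ List.idxOf_le_length

theorem posOf_reverse {l : List ℕ} (hl : l.Nodup) {e : ℕ} (he : e ∈ l) :
    posOf l.reverse e = l.length + 1 - posOf l e := by
  have := List.idxOf_lt_length_iff.mpr he
  simp only [posOf, hl.idxOf_reverse he]
  omega

theorem strictlyBetween_sub_iff {m a b x : ℕ} (ha : a ≤ m) (hb : b ≤ m) (hx : x ≤ m) :
    StrictlyBetween (m - a) (m - b) (m - x) ↔ StrictlyBetween a b x := by
  unfold StrictlyBetween
  omega

theorem arcsCross_sub_iff {m a b c d : ℕ} (ha : a ≤ m) (hb : b ≤ m) (hc : c ≤ m) (hd : d ≤ m) :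
    ArcsCross (m - a) (m - b) (m - c) (m - d) ↔ ArcsCross a b c d := by
  simp only [ArcsCross, strictlyBetween_sub_iff ha hb hc, strictlyBetween_sub_iff ha hb hd]

namespace IsStampFolding

variable {n : ℕ} {p : List ℕ}

theorem length_eq (h : IsStampFolding n p) : p.length = n := by
  simpa using h.1.length_eq

theorem nodup (h : IsStampFolding n p) : p.Nodup :=
  h.1.nodup_iff.mpr List.nodup_range'

theorem posOf_le (h : IsStampFolding n p) (e : ℕ) : posOf p e ≤ n + 1 :=
  h.length_eq ▸ posOf_le_length_add_one p e

theorem posOf_reverse (h : IsStampFolding n p) {k : ℕ} (hk₁ : 1 ≤ k) (hk₂ : k ≤ n) :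
    posOf p.reverse k = n + 1 - posOf p k := by
  have hk : k ∈ p := h.1.mem_iff.mpr (List.mem_range'_1.mpr ⟨hk₁, by omega⟩)
  rw [_root_.posOf_reverse h.nodup hk, h.length_eq]

theorem reverse (h : IsStampFolding n p) : IsStampFolding n p.reverse := by
  refine ⟨p.reverse_perm.trans h.1, fun i j hi hij hj hij₂ ↦ ?_⟩
  rw [h.posOf_reverse hi (by omega), h.posOf_reverse (by omega) (by omega),
    h.posOf_reverse (by omega) (by omega), h.posOf_reverse (by omega) hj,
    arcsCross_sub_iff (h.posOf_le _) (h.posOf_le _) (h.posOf_le _) (h.posOf_le _)]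
  exact h.2 i j hi hij hj hij₂

end IsStampFolding

theorem IsSemiMeander.reverse {n : ℕ} {p : List ℕ} (h : IsSemiMeander n p) :
    IsSemiMeander n p.reverse := by
  refine ⟨h.1.reverse, fun i hi hin hmod ↦ ?_⟩
  rw [h.1.posOf_reverse hi (by omega), h.1.posOf_reverse (by omega) hin,
    h.1.posOf_reverse (by omega) le_rfl,
    strictlyBetween_sub_iff (h.1.posOf_le _) (h.1.posOf_le _) (h.1.posOf_le _)]
  exact h.2 i hi hin hmod

theorem setOf_isStampFolding_finite (n : ℕ) : {p : List ℕ | IsStampFolding n p}.Finite :=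
  (List.range' 1 n).permutations.finite_toSet.subset fun _ hp ↦ List.mem_permutations.mpr hp.1

/-- For `n > 1`, the reversal of a semi-meander of order `n` is a semi-meander of
order `n`; consequently the number of semi-meanders of order `n` is even. -/
theorem semi_meander_reverse_and_even (n : ℕ) (hn : 1 < n) :
    (∀ p : List ℕ, IsSemiMeander n p → IsSemiMeander n p.reverse) ∧
    Even (Set.ncard {p : List ℕ | IsSemiMeander n p}) := by
  refine ⟨fun p hp ↦ hp.reverse, ?_⟩
  exact ((setOf_isStampFolding_finite n).subset fun _ hp ↦ hp.1).even_ncard_of_involution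
    (fun _ hp ↦ hp.reverse) (fun p _ ↦ p.reverse_reverse)
    (fun _ hp ↦ hp.1.nodup.reverse_ne_self (hp.1.length_eq ▸ hn))
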